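/- There exists a Noetherian topological space X and a directed family (E_α) of constructible subsets of X such that X is the union of the E_α, every irreducible closed subset of X is contained in the closure of some E_α, yet no E_α equals X. (Counterexample to EGA I, Corollary 2.4.4.) -/

import Mathlib

open Set TopologicalSpace

/-- The open-set predicate: `∅`, `{ω}` (with `ω = none`), and cofinite sets containing `ω`. -/
def hitchIsOpen (A : Set (Option ℕ)) : Prop :=
  A = ∅ ∨ A = {none} ∨ (none ∈ A ∧ Aᶜ.Finite)

/-- The topology on `X = ℕ ∪ {ω}` (encoded as `Option ℕ`, `ω = none`). -/
def hitchTop : TopologicalSpace (Option ℕ) where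
  IsOpen := hitchIsOpen
  isOpen_univ := Or.inr (Or.inr ⟨trivial, by simp⟩)
  isOpen_inter := by
    rintro A B (rfl | rfl | ⟨hA, hAf⟩) (rfl | rfl | ⟨hB, hBf⟩)
    · exact Or.inl (Set.empty_inter _)
    · exact Or.inl (Set.empty_inter _)
    · exact Or.inl (Set.empty_inter _)
    · exact Or.inl (Set.inter_empty _)
    · exact Or.inr (Or.inl (Set.inter_self _))
    · exact Or.inr (Or.inl (Set.inter_eq_self_of_subset_left (Set.singleton_subset_iff.2 hB)))
    · exact Or.inl (Set.inter_empty _)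
    · exact Or.inr (Or.inl (Set.inter_eq_self_of_subset_right (Set.singleton_subset_iff.2 hA)))
    · exact Or.inr (Or.inr ⟨⟨hA, hB⟩, by rw [Set.compl_inter]; exact hAf.union hBf⟩)
  isOpen_sUnion := by
    intro S hS
    by_cases h : ∃ A ∈ S, none ∈ A ∧ Aᶜ.Finite
    · obtain ⟨A, hAS, hA, hAf⟩ := h
      refine Or.inr (Or.inr ⟨⟨A, hAS, hA⟩, hAf.subset ?_⟩)
      exact Set.compl_subset_compl.2 (Set.subset_sUnion_of_mem hAS)
    · by_cases h2 : ({none} : Set (Option ℕ)) ∈ S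
      · refine Or.inr (Or.inl (subset_antisymm ?_ (Set.subset_sUnion_of_mem h2)))
        rintro x ⟨A, hAS, hx⟩
        rcases hS A hAS with rfl | rfl | h3
        · exact absurd hx (by simp)
        · exact hx
        · exact absurd ⟨A, hAS, h3⟩ h
      · left
        ext x
        simp only [Set.mem_sUnion, Set.mem_empty_iff_false, iff_false, not_exists]
        rintro A ⟨hAS, hx⟩
        rcases hS A hAS with rfl | rfl | h3
        · exact hx
        · exact h2 hAS
        · exact h ⟨A, hAS, h3⟩

/-- Constructible: a finite union of locally closed sets. -/
def IsConstructibleIn {α : Type*} (t : TopologicalSpace α) (E : Set α) : Prop :=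
  ∃ S : Finset (Set α), (∀ s ∈ S, @IsLocallyClosed α t s) ∧ ⋃₀ ↑S = E

/-! The point `ω` is generic: every nonempty open set contains it, so the finite set `{ω}` is
already dense, while no finite set exhausts the infinite space. The space is Noetherian because
every subset is compact: it is either finite or contains some `n`, and the open neighbourhoods of
`n` are cofinite. -/

open Filter Topology

theorem isCompact_of_mem_of_forall_nhds_diff_finite {X : Type*} [TopologicalSpace X]
    {s : Set X} {x : X} (hx : x ∈ s) (h : ∀ U ∈ 𝓝 x, (s \ U).Finite) : IsCompact s := by
  have hval : Tendsto ((↑) : s → X) cofinite (𝓝 x) := fun U hU =>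
    ((h U hU).preimage Subtype.val_injective.injOn).subset fun y hy => ⟨y.2, hy⟩
  simpa [insert_eq_of_mem hx] using hval.isCompact_insert_range_of_cofinite

theorem isConstructibleIn_of_finite {α : Type*} [TopologicalSpace α]
    (h : ∀ x : α, IsLocallyClosed {x}) {s : Set α} (hs : s.Finite) :
    IsConstructibleIn ‹_› s := by
  classical
  refine ⟨hs.toFinset.image ({·}), ?_, ?_⟩
  · simp only [Finset.mem_image]
    rintro _ ⟨x, -, rfl⟩
    exact h x
  · simp [Set.sUnion_image]

attribute [local instance] hitchTop

namespace Hitch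

theorem compl_finite_of_some_mem {U : Set (Option ℕ)} (hU : IsOpen U) {n : ℕ}
    (hn : some n ∈ U) : Uᶜ.Finite := by
  rcases hU with rfl | rfl | ⟨-, hfin⟩
  · simp at hn
  · simp at hn
  · exact hfin

theorem none_mem_of_nonempty {U : Set (Option ℕ)} (hU : IsOpen U) (hne : U.Nonempty) :
    none ∈ U := by
  rcases hU with rfl | rfl | ⟨hnone, -⟩
  · simp at hne
  · rfl
  · exact hnone

theorem dense_none : Dense ({none} : Set (Option ℕ)) :=
  dense_iff_inter_open.2 fun _ hU hne => ⟨none, none_mem_of_nonempty hU hne, rfl⟩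

theorem isCompact (s : Set (Option ℕ)) : IsCompact s := by
  by_cases hs : s.Finite
  · exact hs.isCompact
  · obtain ⟨x, hx, hxnone⟩ := Set.Infinite.exists_notMem_finset hs {none}
    obtain ⟨n, rfl⟩ := Option.ne_none_iff_exists'.1 (by simpa using hxnone)
    refine isCompact_of_mem_of_forall_nhds_diff_finite hx fun U hU => ?_
    obtain ⟨V, hVU, hV, hnV⟩ := mem_nhds_iff.1 hU
    exact (compl_finite_of_some_mem hV hnV).subset
      fun y hy => compl_subset_compl.2 hVU hy.2

theorem noetherianSpace : NoetherianSpace (Option ℕ) :=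
  noetherianSpace_iff_isCompact.2 isCompact

theorem isLocallyClosed_singleton : ∀ x : Option ℕ, IsLocallyClosed {x}
  | none => IsOpen.isLocallyClosed (Or.inr (Or.inl rfl))
  | some n => IsClosed.isLocallyClosed <| isOpen_compl_iff.1 <|
      Or.inr (Or.inr ⟨by simp, by simp⟩)

end Hitch

theorem stmt7 :
    ∃ (X : Type) (t : TopologicalSpace X) (ι : Type) (E : ι → Set X),
      @NoetherianSpace X t ∧
      (∀ i j : ι, ∃ k : ι, E i ⊆ E k ∧ E j ⊆ E k) ∧
      (∀ i, IsConstructibleIn t (E i)) ∧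
      (⋃ i, E i) = Set.univ ∧
      (∀ Z : Set X, @IsClosed X t Z → @IsIrreducible X t Z →
        ∃ i, Z ⊆ @closure X t (E i)) ∧
      (∀ i, E i ≠ Set.univ) := by
  refine ⟨Option ℕ, hitchTop, Finset (Option ℕ), (↑), Hitch.noetherianSpace,
    fun i j => ⟨i ∪ j, by simp, by simp⟩,
    fun i => isConstructibleIn_of_finite Hitch.isLocallyClosed_singleton i.finite_toSet,
    eq_univ_of_forall fun x => mem_iUnion.2 ⟨{x}, by simp⟩,
    fun Z _ _ => ⟨{none}, by simp [Hitch.dense_none.closure_eq]⟩,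
    fun i hi => infinite_univ (hi ▸ i.finite_toSet)⟩
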